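/- Let N = (P, T, F) be a nonredundant workflow net and p ∈ P. There exists k < (‖T‖ + 2)^{|T|} such that some marking m reachable from {i:k} satisfies m[p] > 0, where ‖T‖ denotes the maximum arc weight of N. -/

import Mathlib

/-- A Petri net over places `P` and transitions `T`, given by pre/post arc weights. -/
structure PetriNet (P T : Type) where
  pre : T → P → ℕ
  post : T → P → ℕ

namespace PetriNet

variable {P T : Type}

/-- Transition `t` is enabled in marking `m`. -/
def Enabled (N : PetriNet P T) (m : P → ℕ) (t : T) : Prop := ∀ p, N.pre t p ≤ m p

/-- Firing transition `t` in `m` yields `m'`. -/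
def Fire (N : PetriNet P T) (m : P → ℕ) (t : T) (m' : P → ℕ) : Prop :=
  N.Enabled m t ∧ ∀ p, m' p = m p - N.pre t p + N.post t p

def Step (N : PetriNet P T) (m m' : P → ℕ) : Prop := ∃ t, N.Fire m t m'

/-- Reachability `m →* m'`. -/
def Reach (N : PetriNet P T) : (P → ℕ) → (P → ℕ) → Prop := Relation.ReflTransGen N.Step

/-- Effect of a transition, as an integer vector. -/
def eff (N : PetriNet P T) (t : T) (p : P) : ℤ := (N.post t p : ℤ) - (N.pre t p : ℤ)

def ZStep (N : PetriNet P T) (m m' : P → ℤ) : Prop := ∃ t, ∀ p, m' p = m p + N.eff t p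

/-- Z-reachability: no enabledness constraint, markings range over ℤ. -/
def ZReach (N : PetriNet P T) : (P → ℤ) → (P → ℤ) → Prop := Relation.ReflTransGen N.ZStep

/-- Maximal arc weight `‖T‖`. -/
def maxW (N : PetriNet P T) [Fintype P] [Fintype T] : ℕ :=
  Finset.univ.sup fun t => Finset.univ.sup fun p => max (N.pre t p) (N.post t p)

/-- Edge relation of the underlying graph, on `P ⊕ T`. -/
def Edge (N : PetriNet P T) : (P ⊕ T) → (P ⊕ T) → Prop
  | Sum.inl p, Sum.inr t => 0 < N.pre t p
  | Sum.inr t, Sum.inl p => 0 < N.post t p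
  | _, _ => False

/-- `N` is bounded from marking `m`. -/
def BoundedFrom (N : PetriNet P T) (m : P → ℕ) : Prop :=
  ∃ b : ℕ, ∀ m', N.Reach m m' → ∀ p, m' p ≤ b

/-- `N` is cyclic from marking `m`. -/
def CyclicFrom (N : PetriNet P T) (m : P → ℕ) : Prop :=
  ∀ m', N.Reach m m' → N.Reach m' m

/-- Transition `t` is quasi-live from `m`. -/
def QuasiLiveT (N : PetriNet P T) (m : P → ℕ) (t : T) : Prop :=
  ∃ m', N.Reach m m' ∧ N.Enabled m' t

/-- `N` is quasi-live from `m`. -/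
def QuasiLiveFrom (N : PetriNet P T) (m : P → ℕ) : Prop :=
  ∀ t, N.QuasiLiveT m t

/-- Transition `t` is live from `m`. -/
def LiveT (N : PetriNet P T) (m : P → ℕ) (t : T) : Prop :=
  ∀ m', N.Reach m m' → N.QuasiLiveT m' t

end PetriNet

/-- A workflow net: a Petri net with initial place `ini`, final place `fin`,
no production into `ini`, no consumption from `fin`, and every node on a path
from `ini` to `fin` in the underlying graph. -/
structure WorkflowNet (P T : Type) extends PetriNet P T where
  ini : P
  fin : P
  ini_ne_fin : ini ≠ fin
  no_prod_ini : ∀ t, post t ini = 0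
  no_cons_fin : ∀ t, pre t fin = 0
  on_path : ∀ v : P ⊕ T,
    Relation.ReflTransGen toPetriNet.Edge (Sum.inl ini) v ∧
    Relation.ReflTransGen toPetriNet.Edge v (Sum.inl fin)

namespace WorkflowNet

variable {P T : Type}

/-- The marking `{i : k}`. -/
def iniM [DecidableEq P] (N : WorkflowNet P T) (k : ℕ) : P → ℕ :=
  fun p => if p = N.ini then k else 0

/-- The marking `{f : k}`. -/
def finM [DecidableEq P] (N : WorkflowNet P T) (k : ℕ) : P → ℕ :=
  fun p => if p = N.fin then k else 0

/-- `N` is `k`-sound. -/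
def KSound [DecidableEq P] (N : WorkflowNet P T) (k : ℕ) : Prop :=
  ∀ m, N.toPetriNet.Reach (N.iniM k) m → N.toPetriNet.Reach m (N.finM k)

/-- `N` is generalised sound. -/
def GeneralisedSound [DecidableEq P] (N : WorkflowNet P T) : Prop :=
  ∀ k : ℕ, 1 ≤ k → N.KSound k

/-- `N` is structurally sound. -/
def StructurallySound [DecidableEq P] (N : WorkflowNet P T) : Prop :=
  ∃ k : ℕ, 1 ≤ k ∧ N.KSound k

/-- All places of `N` are nonredundant. -/
def Nonredundant [DecidableEq P] (N : WorkflowNet P T) : Prop :=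
  ∀ p : P, ∃ (k : ℕ) (m : P → ℕ), N.toPetriNet.Reach (N.iniM k) m ∧ 0 < m p

/-- `N` is strongly `k`-sound. -/
def StronglyKSound [DecidableEq P] (N : WorkflowNet P T) (k : ℕ) : Prop :=
  ∀ m : P → ℕ,
    N.toPetriNet.ZReach (fun p => ((N.iniM k) p : ℤ)) (fun p => (m p : ℤ)) →
    N.toPetriNet.Reach m (N.finM k)

end WorkflowNet

/-!
Record the transitions of a firing sequence in order of first occurrence. Every place that
ever carries a token is the initial place or an output place of one of them, and the input
places of each recorded transition are output places of earlier ones. Inductively, from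
`(‖T‖ + 1) ^ j` initial tokens one reaches a marking that puts a token on the initial place
and on every output place of the first `j` recorded transitions: multiplying the tokens by
`‖T‖ + 1` leaves at least `‖T‖ + 1` tokens on each such place, enough to fire the next
transition once and keep all of them marked. As at most `|T|` transitions are recorded,
`(‖T‖ + 1) ^ |T|` initial tokens suffice.
-/

namespace PetriNet

variable {P T : Type}

lemma pre_le_maxW [Fintype P] [Fintype T] (N : PetriNet P T) (t : T) (p : P) :
    N.pre t p ≤ N.maxW :=
  (le_max_left _ _).trans <|
    (Finset.le_sup (f := fun p => max (N.pre t p) (N.post t p)) (Finset.mem_univ p)).trans <|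
      Finset.le_sup (f := fun t => Finset.univ.sup fun p => max (N.pre t p) (N.post t p))
        (Finset.mem_univ t)

variable {N : PetriNet P T} {m m' a a' : P → ℕ}

lemma Enabled.step {t : T} (h : N.Enabled m t) :
    N.Step m (fun p => m p - N.pre t p + N.post t p) :=
  ⟨t, h, fun _ => rfl⟩

lemma Fire.pos_or_pos_post {t : T} (h : N.Fire m t m') {p : P} (hp : 0 < m' p) :
    0 < m p ∨ 0 < N.post t p := by
  have := h.2 p
  omega

lemma Step.add_right (h : N.Step m m') (a : P → ℕ) : N.Step (m + a) (m' + a) := by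
  obtain ⟨t, hen, hm'⟩ := h
  refine ⟨t, fun p => (hen p).trans (Nat.le_add_right _ _), fun p => ?_⟩
  have := hen p
  have := hm' p
  simp only [Pi.add_apply]
  omega

lemma Reach.add_right (h : N.Reach m m') (a : P → ℕ) : N.Reach (m + a) (m' + a) :=
  Relation.ReflTransGen.lift (· + a) (fun _ _ (hs : N.Step _ _) => hs.add_right a) _ _ h

lemma Reach.add (hm : N.Reach m m') (ha : N.Reach a a') : N.Reach (m + a) (m' + a') := by
  have hshift := ha.add_right m'
  rw [add_comm a, add_comm a'] at hshift
  exact (hm.add_right a).trans hshift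

lemma Reach.nsmul (h : N.Reach m m') (c : ℕ) : N.Reach (c • m) (c • m') := by
  induction c with
  | zero => rw [zero_nsmul, zero_nsmul]; exact Relation.ReflTransGen.refl
  | succ c ih => simpa only [succ_nsmul] using ih.add h

end PetriNet

namespace WorkflowNet

variable {P T : Type}

lemma nonempty_transitions (N : WorkflowNet P T) : Nonempty T := by
  rcases (N.on_path (Sum.inl N.ini)).2.cases_head with h | ⟨v, hedge, -⟩
  · exact absurd (Sum.inl_injective h) N.ini_ne_fin
  · cases v with
    | inl q => exact hedge.elim
    | inr t => exact ⟨t⟩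

lemma iniM_mul [DecidableEq P] (N : WorkflowNet P T) (c k : ℕ) :
    N.iniM (c * k) = c • N.iniM k := by
  funext p
  by_cases hp : p = N.ini <;> simp [iniM, hp]

def tokenPlaces (N : WorkflowNet P T) (S : Finset T) : Set P :=
  {q | q = N.ini ∨ ∃ t ∈ S, 0 < N.post t q}

lemma tokenPlaces_insert [DecidableEq T] (N : WorkflowNet P T) (S : Finset T) (t : T) :
    N.tokenPlaces (insert t S) = N.tokenPlaces S ∪ {q | 0 < N.post t q} := by
  ext q
  simp only [tokenPlaces, Finset.mem_insert, exists_eq_or_imp, Set.mem_union, Set.mem_ofPred_eq]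
  rw [or_comm (a := 0 < N.post t q), ← or_assoc]

def MarkableWithin [DecidableEq P] (N : WorkflowNet P T) (K : ℕ) (V : Set P) : Prop :=
  ∃ k ≤ K, ∃ m, N.toPetriNet.Reach (N.iniM k) m ∧ ∀ q ∈ V, 0 < m q

lemma markableWithin_one_tokenPlaces_empty [DecidableEq P] (N : WorkflowNet P T) :
    N.MarkableWithin 1 (N.tokenPlaces ∅) :=
  ⟨1, le_rfl, _, Relation.ReflTransGen.refl, fun q hq => by simp_all [tokenPlaces, iniM]⟩

lemma MarkableWithin.union_post [DecidableEq P] [Fintype P] [Fintype T] {N : WorkflowNet P T}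
    {K : ℕ} {V : Set P} (hV : N.MarkableWithin K V) {t : T} (hpre : ∀ q, 0 < N.pre t q → q ∈ V) :
    N.MarkableWithin ((N.maxW + 1) * K) (V ∪ {q | 0 < N.post t q}) := by
  obtain ⟨k, hk, m, hreach, hpos⟩ := hV
  have hbig : ∀ q ∈ V, N.pre t q < (N.maxW + 1) * m q := fun q hq =>
    calc N.pre t q ≤ N.maxW := N.pre_le_maxW t q
      _ < (N.maxW + 1) * 1 := by omega
      _ ≤ (N.maxW + 1) * m q := Nat.mul_le_mul_left _ (hpos q hq)
  have hen : N.Enabled ((N.maxW + 1) • m) t := fun q => by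
    by_cases hq : 0 < N.pre t q
    · simpa only [Pi.smul_apply, smul_eq_mul] using (hbig q (hpre q hq)).le
    · omega
  refine ⟨(N.maxW + 1) * k, Nat.mul_le_mul_left _ hk, _,
    (iniM_mul N _ k ▸ hreach.nsmul (N.maxW + 1)).tail hen.step, ?_⟩
  rintro q (hq | hq)
  · have := hbig q hq
    simp only [Pi.smul_apply, smul_eq_mul]
    omega
  · have : 0 < N.post t q := hq
    omega

theorem exists_markableWithin_of_reach [DecidableEq P] [Fintype P] [Fintype T]
    {N : WorkflowNet P T} {k : ℕ} {m : P → ℕ} (h : N.toPetriNet.Reach (N.iniM k) m) :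
    ∃ S : Finset T, (∀ q, 0 < m q → q ∈ N.tokenPlaces S) ∧
      N.MarkableWithin ((N.maxW + 1) ^ S.card) (N.tokenPlaces S) := by
  classical
  induction h with
  | refl =>
    refine ⟨∅, fun q hq => Or.inl ?_, N.markableWithin_one_tokenPlaces_empty⟩
    by_contra hne
    simp [iniM, hne] at hq
  | @tail _ mc _ hstep ih =>
    obtain ⟨S, hsupp, hmark⟩ := ih
    obtain ⟨t, hfire⟩ := hstep
    have hsupp' : ∀ q, 0 < mc q → q ∈ N.tokenPlaces (insert t S) := fun q hq => by
      rw [tokenPlaces_insert]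
      exact (hfire.pos_or_pos_post hq).imp (hsupp q) id
    by_cases htS : t ∈ S
    · exact ⟨S, by simpa only [Finset.insert_eq_of_mem htS] using hsupp', hmark⟩
    refine ⟨insert t S, hsupp', ?_⟩
    rw [tokenPlaces_insert, Finset.card_insert_of_notMem htS, pow_succ']
    exact hmark.union_post fun q hq => hsupp q (hq.trans_le (hfire.1 q))

end WorkflowNet

/-- In a nonredundant workflow net, every place can be marked starting from a
small number of initial tokens. -/
theorem place_cover_small {P T : Type} [DecidableEq P] [Fintype P] [Fintype T]
    (N : WorkflowNet P T) (hN : N.Nonredundant) (p : P) :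
    ∃ k : ℕ, k < (N.toPetriNet.maxW + 2) ^ (Fintype.card T) ∧
      ∃ m : P → ℕ, N.toPetriNet.Reach (N.iniM k) m ∧ 0 < m p := by
  obtain ⟨k, m, hreach, hp⟩ := hN p
  obtain ⟨S, hsupp, k', hk', m', hreach', hpos⟩ := N.exists_markableWithin_of_reach hreach
  have hT : Fintype.card T ≠ 0 := (Fintype.card_pos_iff.mpr N.nonempty_transitions).ne'
  refine ⟨k', ?_, m', hreach', hpos p (hsupp p hp)⟩
  calc k' ≤ (N.maxW + 1) ^ S.card := hk'
    _ ≤ (N.maxW + 1) ^ Fintype.card T := Nat.pow_le_pow_right (by omega) S.card_le_univ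
    _ < (N.maxW + 2) ^ Fintype.card T := Nat.pow_lt_pow_left (by omega) hT
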